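/- Let B ∈ ℝ^{n×n} be symmetric positive definite and let s, γ ∈ ℝⁿ with s ≠ 0 and γᵀs > 0. Define ψ(A) := trace(A) − ln det(A) for positive definite A, cos β := (sᵀBs)/(‖s‖ ‖Bs‖), q := (sᵀBs)/‖s‖², a := (γᵀs)/‖s‖², b := ‖γ‖²/(γᵀs), and let B⁺ be the BFGS-type update of B with (s, γ). Then ψ(B⁺) = ψ(B) + (b − ln a − 1) + ln(cos²β) + [1 − q/cos²β + ln(q/cos²β)]. -/

import Mathlib

/-!
Both correction terms of the update are rank one: `B⁺ = B + u₁ v₁ᵀ + u₂ v₂ᵀ` with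
`u₁ = -(sᵀBs)⁻¹ Bs`, `v₁ = Bᵀs`, `u₂ = (γᵀs)⁻¹ γ`, `v₂ = γ`. The trace is then read off
directly, and the matrix determinant lemma reduces `det B⁺ / det B` to the determinant of the
`2 × 2` matrix `(δᵢⱼ + vᵢᵀ B⁻¹ uⱼ)`, whose `(1,1)` entry vanishes, so that
`det B⁺ = det B · γᵀs / sᵀBs`. The claimed identity is then a rearrangement of logarithms:
`q / cos²β = ‖Bs‖² / sᵀBs`, and `ln cos²β + ln (q / cos²β) = ln q`.
-/

open RealInnerProductSpace

noncomputable section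

abbrev E (n : ℕ) := EuclideanSpace ℝ (Fin n)

def quad {n : ℕ} (B : Matrix (Fin n) (Fin n) ℝ) (d : E n) : ℝ :=
  ∑ i, ∑ j, d i * B i j * d j

def mulVecE {n : ℕ} (B : Matrix (Fin n) (Fin n) ℝ) (v : E n) : E n :=
  Matrix.toEuclideanLin B v

def outer {n : ℕ} (u v : E n) : Matrix (Fin n) (Fin n) ℝ :=
  Matrix.of fun i j => u i * v j

def bfgsUpdate {n : ℕ} (B : Matrix (Fin n) (Fin n) ℝ) (s γ : E n) :
    Matrix (Fin n) (Fin n) ℝ :=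
  B - (quad B s)⁻¹ • (B * outer s s * B) + (⟪γ, s⟫)⁻¹ • outer γ γ

namespace Matrix

theorem det_add_vecMulVec_add_vecMulVec {m α : Type*} [Fintype m] [DecidableEq m] [CommRing α]
    {A : Matrix m m α} (hA : IsUnit A.det) (u₁ v₁ u₂ v₂ : m → α) :
    (A + vecMulVec u₁ v₁ + vecMulVec u₂ v₂).det =
      A.det * !![1 + v₁ ⬝ᵥ A⁻¹ *ᵥ u₁, v₁ ⬝ᵥ A⁻¹ *ᵥ u₂;
                 v₂ ⬝ᵥ A⁻¹ *ᵥ u₁, 1 + v₂ ⬝ᵥ A⁻¹ *ᵥ u₂].det := by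
  have hUV : vecMulVec u₁ v₁ + vecMulVec u₂ v₂ = (of ![u₁, u₂])ᵀ * of ![v₁, v₂] := by
    ext i j
    simp [mul_apply, Fin.sum_univ_two, vecMulVec_apply]
  rw [add_assoc, hUV, det_add_mul _ _ hA]
  congr 2
  ext i j
  fin_cases i <;> fin_cases j <;> simp [vecMul_transpose, dotProduct_mulVec] <;>
    exact dotProduct_comm _ _

end Matrix

open Matrix WithLp

theorem EuclideanSpace.real_inner_eq_dotProduct {ι : Type*} [Fintype ι]
    (x y : EuclideanSpace ℝ ι) : ⟪x, y⟫ = ofLp x ⬝ᵥ ofLp y := by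
  rw [EuclideanSpace.inner_eq_star_dotProduct, dotProduct_comm]
  rfl

variable {n : ℕ}

theorem ofLp_mulVecE (B : Matrix (Fin n) (Fin n) ℝ) (s : E n) :
    ofLp (mulVecE B s) = B *ᵥ ofLp s :=
  rfl

theorem quad_eq_dotProduct (B : Matrix (Fin n) (Fin n) ℝ) (s : E n) :
    quad B s = ofLp s ⬝ᵥ B *ᵥ ofLp s := by
  simp only [quad, dotProduct, mulVec, Finset.mul_sum, mul_assoc]

theorem quad_eq_inner (B : Matrix (Fin n) (Fin n) ℝ) (s : E n) :
    quad B s = ⟪s, mulVecE B s⟫ := by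
  rw [quad_eq_dotProduct, EuclideanSpace.real_inner_eq_dotProduct, ofLp_mulVecE]

theorem quad_pos {B : Matrix (Fin n) (Fin n) ℝ} (hB : B.PosDef) {s : E n} (hs : s ≠ 0) :
    0 < quad B s := by
  simpa [quad_eq_dotProduct] using hB.dotProduct_mulVec_pos (x := ofLp s) (by simpa using hs)

theorem bfgsUpdate_eq_add_vecMulVec (B : Matrix (Fin n) (Fin n) ℝ) (s γ : E n) :
    bfgsUpdate B s γ = B + vecMulVec (-(quad B s)⁻¹ • (B *ᵥ ofLp s)) (ofLp s ᵥ* B)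
      + vecMulVec ((⟪γ, s⟫)⁻¹ • ofLp γ) (ofLp γ) := by
  rw [bfgsUpdate, outer, outer, ← vecMulVec, ← vecMulVec, mul_vecMulVec, vecMulVec_mul,
    smul_vecMulVec, smul_vecMulVec, neg_smul, ← sub_eq_add_neg]

theorem trace_bfgsUpdate {B : Matrix (Fin n) (Fin n) ℝ} (hB : B.IsSymm) (s γ : E n) :
    (bfgsUpdate B s γ).trace = B.trace - ‖mulVecE B s‖ ^ 2 / quad B s + ‖γ‖ ^ 2 / ⟪γ, s⟫ := by
  rw [bfgsUpdate_eq_add_vecMulVec, trace_add, trace_add, trace_vecMulVec, trace_vecMulVec,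
    ← mulVec_transpose, hB.eq, smul_dotProduct, smul_dotProduct]
  simp only [← real_inner_self_eq_norm_sq, EuclideanSpace.real_inner_eq_dotProduct,
    ofLp_mulVecE, smul_eq_mul]
  ring

theorem det_bfgsUpdate {B : Matrix (Fin n) (Fin n) ℝ} (hB : IsUnit B.det) {s : E n}
    (hs : quad B s ≠ 0) (γ : E n) :
    (bfgsUpdate B s γ).det = B.det * (⟪γ, s⟫ / quad B s) := by
  have hBs : B⁻¹ *ᵥ B *ᵥ ofLp s = ofLp s := by
    rw [mulVec_mulVec, nonsing_inv_mul B hB, one_mulVec]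
  rw [bfgsUpdate_eq_add_vecMulVec, det_add_vecMulVec_add_vecMulVec hB, det_fin_two_of]
  simp only [mulVec_smul, dotProduct_smul, ← dotProduct_mulVec, mulVec_mulVec,
    mul_nonsing_inv B hB, one_mulVec, hBs, smul_eq_mul]
  rw [← quad_eq_dotProduct, EuclideanSpace.real_inner_eq_dotProduct, dotProduct_comm (ofLp γ),
    neg_mul, inv_mul_cancel₀ hs, add_neg_cancel, zero_mul, zero_sub]
  generalize ofLp s ⬝ᵥ ofLp γ = τ
  rcases eq_or_ne τ 0 with rfl | hτ
  · simp
  · field_simp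

/-- the trace−log-det potential identity for the BFGS-type update. -/
theorem stmt18 {n : ℕ} (B : Matrix (Fin n) (Fin n) ℝ) (hB : B.PosDef)
    (s γ : E n) (hs : s ≠ 0) (hγs : 0 < ⟪γ, s⟫)
    (cosβ q a b : ℝ)
    (hcos : cosβ = quad B s / (‖s‖ * ‖mulVecE B s‖))
    (hq : q = quad B s / ‖s‖ ^ 2)
    (ha : a = ⟪γ, s⟫ / ‖s‖ ^ 2)
    (hb : b = ‖γ‖ ^ 2 / ⟪γ, s⟫) :
    (bfgsUpdate B s γ).trace - Real.log (bfgsUpdate B s γ).det =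
      (B.trace - Real.log B.det) + (b - Real.log a - 1) + Real.log (cosβ ^ 2) +
        (1 - q / cosβ ^ 2 + Real.log (q / cosβ ^ 2)) := by
  have hσ : 0 < quad B s := quad_pos hB hs
  have hs' : 0 < ‖s‖ := norm_pos_iff.mpr hs
  have hBs : 0 < ‖mulVecE B s‖ := by
    refine norm_pos_iff.mpr fun h => hσ.ne' ?_
    rw [quad_eq_inner, h, inner_zero_right]
  have hcos0 : cosβ ≠ 0 := by rw [hcos]; positivity
  have hq_cos : q / cosβ ^ 2 = ‖mulVecE B s‖ ^ 2 / quad B s := by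
    rw [hq, hcos]; field_simp
  have hlog_q : Real.log (cosβ ^ 2) + Real.log (q / cosβ ^ 2) = Real.log q := by
    rw [← Real.log_mul (by positivity) (by rw [hq_cos]; positivity),
      mul_div_cancel₀ _ (by positivity)]
  rw [hq_cos, hq, Real.log_div hσ.ne' (by positivity)] at hlog_q
  rw [trace_bfgsUpdate (isHermitian_iff_isSymm.mp hB.isHermitian),
    det_bfgsUpdate hB.det_pos.ne'.isUnit hσ.ne', ← hb, ha, hq_cos,
    Real.log_mul hB.det_pos.ne' (by positivity), Real.log_div hγs.ne' hσ.ne',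
    Real.log_div hγs.ne' (by positivity)]
  linarith
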